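/- Let G be a finite group and N a normal subgroup with G/N isomorphic to (ℤ/2ℤ) × (ℤ/2ℤ). Let ω₁ and ω₂ be two distinct nontrivial homomorphisms G → ℂˣ trivial on N, let N₁ = ker ω₁, and let ω₂₁ be the restriction of ω₂ to N₁. Let π be an irreducible finite-dimensional complex representation of G with π ≅ π ⊗ ω₁ and π ≅ π ⊗ ω₂, and write Res_{N₁} π ≅ π₁ ⊕ π₂ with π₁, π₂ irreducible and π₁ ≇ π₂. Then either π₁ ⊗ ω₂₁ ≅ π₁ (in which case also π₂ ⊗ ω₂₁ ≅ π₂), or π₁ ⊗ ω₂₁ ≅ π₂. -/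

import Mathlib

noncomputable section

namespace RestrictionMult

variable {G : Type*} [Group G]

/-- The submodule of equivariant linear maps between two representations. -/
def equivariantHoms {V W : Type*} [AddCommGroup V] [Module ℂ V]
    [AddCommGroup W] [Module ℂ W]
    (π : Representation ℂ G V) (σ : Representation ℂ G W) :
    Submodule ℂ (V →ₗ[ℂ] W) where
  carrier := {f | ∀ g v, f (π g v) = σ g (f v)}
  add_mem' := by intro f₁ f₂ h₁ h₂ g v; simp [h₁ g v, h₂ g v]
  zero_mem' := by intro g v; simp
  smul_mem' := by intro c f hf g v; simp [hf g v]

/-- Two representations are equivalent (isomorphic). -/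
def IsRepEquiv {V W : Type*} [AddCommGroup V] [Module ℂ V]
    [AddCommGroup W] [Module ℂ W]
    (π : Representation ℂ G V) (σ : Representation ℂ G W) : Prop :=
  ∃ e : V ≃ₗ[ℂ] W, ∀ g v, e (π g v) = σ g (e v)

/-- A representation is irreducible if the space is nonzero and the only invariant
submodules are `⊥` and `⊤`. -/
def IsIrreducibleRep {V : Type*} [AddCommGroup V] [Module ℂ V]
    (π : Representation ℂ G V) : Prop :=
  (∃ v : V, v ≠ 0) ∧
    ∀ U : Submodule ℂ V, (∀ g, ∀ v ∈ U, π g v ∈ U) → U = ⊥ ∨ U = ⊤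

/-- The twist of a representation by a character `χ : G →* ℂˣ`. -/
def twist {V : Type*} [AddCommGroup V] [Module ℂ V]
    (π : Representation ℂ G V) (χ : G →* ℂˣ) : Representation ℂ G V where
  toFun g := (χ g : ℂ) • π g
  map_one' := by simp
  map_mul' g h := by
    ext v
    simp only [Module.End.mul_apply, LinearMap.smul_apply, map_smul, map_mul, Units.val_mul,
      mul_smul]
    rw [smul_comm]

/-- The direct sum of two representations. -/
def dsum {V W : Type*} [AddCommGroup V] [Module ℂ V]
    [AddCommGroup W] [Module ℂ W]
    (π : Representation ℂ G V) (σ : Representation ℂ G W) :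
    Representation ℂ G (V × W) where
  toFun g := (π g).prodMap (σ g)
  map_one' := by ext v <;> simp
  map_mul' g h := by ext v <;> simp [Module.End.mul_apply]

/-- The subrepresentation on an invariant submodule. -/
def resSub {V : Type*} [AddCommGroup V] [Module ℂ V]
    (π : Representation ℂ G V) (U : Submodule ℂ V)
    (hU : ∀ g, ∀ v ∈ U, π g v ∈ U) : Representation ℂ G U where
  toFun g := (π g).restrict (fun v hv => hU g v hv)
  map_one' := by ext v; simp [LinearMap.restrict_apply]
  map_mul' g h := by ext v; simp [LinearMap.restrict_apply, Module.End.mul_apply]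

/-- The conjugate `π^g` of a representation of a normal subgroup `N`,
given by `x ↦ π (g⁻¹ x g)`. -/
def conjRep {N : Subgroup G} [N.Normal] {V : Type*} [AddCommGroup V] [Module ℂ V]
    (π : Representation ℂ N V) (g : G) : Representation ℂ N V :=
  π.comp (MulAut.conjNormal g⁻¹ : N ≃* N).toMonoidHom

/-- The space of the representation of `G` induced from a representation of a
subgroup `N`: functions `f : G → V` with `f (n * x) = π n (f x)`. -/
def indSubmodule (N : Subgroup G) {V : Type*} [AddCommGroup V] [Module ℂ V]
    (π : Representation ℂ N V) : Submodule ℂ (G → V) where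
  carrier := {f | ∀ (n : N) (x : G), f (n * x) = π n (f x)}
  add_mem' := by intro f₁ f₂ h₁ h₂ n x; simp [h₁ n x, h₂ n x]
  zero_mem' := by intro n x; simp
  smul_mem' := by intro c f hf n x; simp [hf n x]

/-- The representation of `G` induced from a representation `π` of a subgroup `N`,
acting by right translation on `indSubmodule N π`. -/
def ind (N : Subgroup G) {V : Type*} [AddCommGroup V] [Module ℂ V]
    (π : Representation ℂ N V) : Representation ℂ G (indSubmodule N π) where
  toFun g :=
    { toFun := fun f => ⟨fun x => (f : G → V) (x * g),
        fun n x => by simpa [mul_assoc] using f.2 n (x * g)⟩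
      map_add' := fun f₁ f₂ => by ext x; rfl
      map_smul' := fun c f => by ext x; rfl }
  map_one' := by ext f x; simp
  map_mul' g h := by ext f x; simp [Module.End.mul_apply, mul_assoc]

/-!
Twisting by `ω₂` fixes `π`, hence fixes `Res_{N₁} π ≅ π₁ ⊕ π₂`, so
`π₁ ⊕ π₂ ≅ (π₁ ⊗ ω₂₁) ⊕ (π₂ ⊗ ω₂₁)`. For two non-isomorphic irreducible summands such a
decomposition is unique up to order: by Schur's lemma each `πᵢ` is isomorphic to one of the
twisted summands, and they cannot both pick the same one. The two orders are the two cases.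
-/

section Equivalence

variable {V W U V' W' : Type*}
  [AddCommGroup V] [Module ℂ V] [AddCommGroup W] [Module ℂ W]
  [AddCommGroup U] [Module ℂ U]
  [AddCommGroup V'] [Module ℂ V'] [AddCommGroup W'] [Module ℂ W']

theorem IsRepEquiv.symm {π : Representation ℂ G V} {σ : Representation ℂ G W}
    (h : IsRepEquiv π σ) : IsRepEquiv σ π := by
  obtain ⟨e, he⟩ := h
  refine ⟨e.symm, fun g w => e.injective ?_⟩
  rw [e.apply_symm_apply, he, e.apply_symm_apply]

theorem IsRepEquiv.trans {π : Representation ℂ G V} {σ : Representation ℂ G W}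
    {τ : Representation ℂ G U} (h₁ : IsRepEquiv π σ) (h₂ : IsRepEquiv σ τ) :
    IsRepEquiv π τ := by
  obtain ⟨e₁, he₁⟩ := h₁
  obtain ⟨e₂, he₂⟩ := h₂
  exact ⟨e₁.trans e₂, fun g v => by simp [he₁, he₂]⟩

theorem IsRepEquiv.comp {K : Type*} [Group K] {π : Representation ℂ G V}
    {σ : Representation ℂ G W} (h : IsRepEquiv π σ) (f : K →* G) :
    IsRepEquiv (π.comp f) (σ.comp f) := by
  obtain ⟨e, he⟩ := h
  exact ⟨e, fun k v => he (f k) v⟩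

theorem IsRepEquiv.twist {π : Representation ℂ G V} {σ : Representation ℂ G W}
    (h : IsRepEquiv π σ) (χ : G →* ℂˣ) : IsRepEquiv (twist π χ) (twist σ χ) := by
  obtain ⟨e, he⟩ := h
  exact ⟨e, fun g v => by simp [RestrictionMult.twist, he]⟩

theorem isRepEquiv_dsum_comm (π : Representation ℂ G V) (σ : Representation ℂ G W) :
    IsRepEquiv (dsum π σ) (dsum σ π) :=
  ⟨LinearEquiv.prodComm ℂ V W, fun _ _ => rfl⟩

@[simp]
theorem dsum_apply (π : Representation ℂ G V) (σ : Representation ℂ G W) (g : G) (x : V × W) :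
    dsum π σ g x = (π g x.1, σ g x.2) :=
  rfl

theorem twist_comp {K : Type*} [Group K] (π : Representation ℂ G V) (χ : G →* ℂˣ)
    (f : K →* G) : (twist π χ).comp f = twist (π.comp f) (χ.comp f) :=
  rfl

theorem twist_dsum (π : Representation ℂ G V) (σ : Representation ℂ G W) (χ : G →* ℂˣ) :
    twist (dsum π σ) χ = dsum (twist π χ) (twist σ χ) := by
  ext g x <;> rfl

theorem IsIrreducibleRep.twist {π : Representation ℂ G V} (h : IsIrreducibleRep π)
    (χ : G →* ℂˣ) : IsIrreducibleRep (twist π χ) := by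
  refine ⟨h.1, fun U hU => h.2 U fun g v hv => ?_⟩
  have hχv : (χ g : ℂ) • π g v ∈ U := hU g v hv
  rwa [U.smul_mem_iff (Units.ne_zero (χ g))] at hχv

theorem IsIrreducibleRep.isRepEquiv_of_ne_zero {π : Representation ℂ G V}
    {σ : Representation ℂ G W} (hπ : IsIrreducibleRep π) (hσ : IsIrreducibleRep σ)
    (f : V →ₗ[ℂ] W) (hf : ∀ g v, f (π g v) = σ g (f v)) (hf0 : f ≠ 0) :
    IsRepEquiv π σ := by
  have hker : ∀ g, ∀ v ∈ LinearMap.ker f, π g v ∈ LinearMap.ker f := by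
    intro g v hv
    rw [LinearMap.mem_ker] at hv ⊢
    rw [hf, hv, map_zero]
  have hrange : ∀ g, ∀ w ∈ LinearMap.range f, σ g w ∈ LinearMap.range f := by
    rintro g w ⟨v, rfl⟩
    exact ⟨π g v, hf g v⟩
  have hinj : LinearMap.ker f = ⊥ :=
    (hπ.2 _ hker).resolve_right fun h => hf0 (LinearMap.ker_eq_top.mp h)
  have hsurj : LinearMap.range f = ⊤ :=
    (hσ.2 _ hrange).resolve_left fun h => hf0 (LinearMap.range_eq_bot.mp h)
  exact ⟨LinearEquiv.ofBijective f ⟨LinearMap.ker_eq_bot.mp hinj, LinearMap.range_eq_top.mp hsurj⟩,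
    hf⟩

theorem IsRepEquiv.left_summand {π₁ : Representation ℂ G V} {π₂ : Representation ℂ G W}
    {σ₁ : Representation ℂ G V'} {σ₂ : Representation ℂ G W'}
    (hπ₁ : IsIrreducibleRep π₁) (hσ₁ : IsIrreducibleRep σ₁) (hσ₂ : IsIrreducibleRep σ₂)
    (h : IsRepEquiv (dsum π₁ π₂) (dsum σ₁ σ₂)) :
    IsRepEquiv π₁ σ₁ ∨ IsRepEquiv π₁ σ₂ := by
  obtain ⟨e, he⟩ := h
  have he₁ : ∀ g v, e (π₁ g v, 0) = (σ₁ g (e (v, 0)).1, σ₂ g (e (v, 0)).2) := fun g v => by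
    simpa using he g (v, 0)
  let f₁ := LinearMap.fst ℂ V' W' ∘ₗ e.toLinearMap ∘ₗ LinearMap.inl ℂ V W
  let f₂ := LinearMap.snd ℂ V' W' ∘ₗ e.toLinearMap ∘ₗ LinearMap.inl ℂ V W
  by_cases hf₁ : f₁ = 0
  · refine .inr (hπ₁.isRepEquiv_of_ne_zero hσ₂ f₂ (fun g v => congrArg Prod.snd (he₁ g v)) ?_)
    intro hf₂
    obtain ⟨v, hv⟩ := hπ₁.1
    have hev : e (v, 0) = 0 := Prod.ext (LinearMap.congr_fun hf₁ v) (LinearMap.congr_fun hf₂ v)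
    exact hv (congrArg Prod.fst (e.map_eq_zero_iff.mp hev))
  · exact .inl (hπ₁.isRepEquiv_of_ne_zero hσ₁ f₁ (fun g v => congrArg Prod.fst (he₁ g v)) hf₁)

theorem IsRepEquiv.dsum_cases {π₁ : Representation ℂ G V} {π₂ : Representation ℂ G W}
    {σ₁ : Representation ℂ G V'} {σ₂ : Representation ℂ G W'}
    (hπ₁ : IsIrreducibleRep π₁) (hπ₂ : IsIrreducibleRep π₂)
    (hσ₁ : IsIrreducibleRep σ₁) (hσ₂ : IsIrreducibleRep σ₂) (hπ₁₂ : ¬ IsRepEquiv π₁ π₂)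
    (h : IsRepEquiv (dsum π₁ π₂) (dsum σ₁ σ₂)) :
    (IsRepEquiv π₁ σ₁ ∧ IsRepEquiv π₂ σ₂) ∨ (IsRepEquiv π₁ σ₂ ∧ IsRepEquiv π₂ σ₁) := by
  have h' : IsRepEquiv (dsum π₂ π₁) (dsum σ₂ σ₁) :=
    ((isRepEquiv_dsum_comm π₂ π₁).trans h).trans (isRepEquiv_dsum_comm σ₁ σ₂)
  rcases h.left_summand hπ₁ hσ₁ hσ₂ with h₁₁ | h₁₂ <;>
    rcases h'.left_summand hπ₂ hσ₂ hσ₁ with h₂₂ | h₂₁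
  · exact .inl ⟨h₁₁, h₂₂⟩
  · exact absurd (h₁₁.trans h₂₁.symm) hπ₁₂
  · exact absurd (h₁₂.trans h₂₂.symm) hπ₁₂
  · exact .inr ⟨h₁₂, h₂₁⟩

end Equivalence

theorem twist_components_dichotomy_general
    {G : Type*} [Group G]
    (ω₁ ω₂ : G →* ℂˣ)
    {V V₁ V₂ : Type*}
    [AddCommGroup V] [Module ℂ V]
    [AddCommGroup V₁] [Module ℂ V₁]
    [AddCommGroup V₂] [Module ℂ V₂]
    (π : Representation ℂ G V)
    (h₂ : IsRepEquiv π (twist π ω₂))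
    (π₁ : Representation ℂ ω₁.ker V₁) (hπ₁ : IsIrreducibleRep π₁)
    (π₂ : Representation ℂ ω₁.ker V₂) (hπ₂ : IsIrreducibleRep π₂)
    (hπ₁₂ : ¬ IsRepEquiv π₁ π₂)
    (hres : IsRepEquiv (π.comp ω₁.ker.subtype) (dsum π₁ π₂)) :
    (IsRepEquiv (twist π₁ (ω₂.comp ω₁.ker.subtype)) π₁ ∧
        IsRepEquiv (twist π₂ (ω₂.comp ω₁.ker.subtype)) π₂) ∨
      IsRepEquiv (twist π₁ (ω₂.comp ω₁.ker.subtype)) π₂ := by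
  set χ := ω₂.comp ω₁.ker.subtype
  have hres_twist : IsRepEquiv (π.comp ω₁.ker.subtype) (dsum (twist π₁ χ) (twist π₂ χ)) := by
    rw [← twist_dsum]
    exact (twist_comp π ω₂ ω₁.ker.subtype ▸ h₂.comp ω₁.ker.subtype).trans (hres.twist χ)
  rcases (hres.symm.trans hres_twist).dsum_cases hπ₁ hπ₂ (hπ₁.twist χ) (hπ₂.twist χ) hπ₁₂ with
    ⟨h₁₁, h₂₂⟩ | ⟨-, h₂₁⟩
  · exact .inl ⟨h₁₁.symm, h₂₂.symm⟩
  · exact .inr h₂₁.symm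

/-- With `N ⊴ G`, `G/N ≅ ℤ/2 × ℤ/2`, distinct nontrivial characters
`ω₁, ω₂` of `G` trivial on `N`, `N₁ = ker ω₁`, `ω₂₁ = ω₂|_{N₁}`, and `π` an irreducible
representation of `G` with `π ≅ π ⊗ ω₁` and `π ≅ π ⊗ ω₂`, write
`Res_{N₁} π ≅ π₁ ⊕ π₂` with `π₁ ≇ π₂` irreducible.  Then either `π₁ ⊗ ω₂₁ ≅ π₁`
(in which case also `π₂ ⊗ ω₂₁ ≅ π₂`), or `π₁ ⊗ ω₂₁ ≅ π₂`. -/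
theorem twist_components_dichotomy
    {G : Type*} [Group G] [Finite G] (N : Subgroup G) [N.Normal]
    (hquot : Nonempty ((G ⧸ N) ≃* Multiplicative (ZMod 2) × Multiplicative (ZMod 2)))
    (ω₁ ω₂ : G →* ℂˣ) (hne : ω₁ ≠ ω₂) (hω₁ : ω₁ ≠ 1) (hω₂ : ω₂ ≠ 1)
    (hω₁N : ∀ n ∈ N, ω₁ n = 1) (hω₂N : ∀ n ∈ N, ω₂ n = 1)
    {V V₁ V₂ : Type*}
    [AddCommGroup V] [Module ℂ V] [FiniteDimensional ℂ V]
    [AddCommGroup V₁] [Module ℂ V₁] [FiniteDimensional ℂ V₁]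
    [AddCommGroup V₂] [Module ℂ V₂] [FiniteDimensional ℂ V₂]
    (π : Representation ℂ G V) (hπ : IsIrreducibleRep π)
    (h₁ : IsRepEquiv π (twist π ω₁)) (h₂ : IsRepEquiv π (twist π ω₂))
    (π₁ : Representation ℂ ω₁.ker V₁) (hπ₁ : IsIrreducibleRep π₁)
    (π₂ : Representation ℂ ω₁.ker V₂) (hπ₂ : IsIrreducibleRep π₂)
    (hπ₁₂ : ¬ IsRepEquiv π₁ π₂)
    (hres : IsRepEquiv (π.comp ω₁.ker.subtype) (dsum π₁ π₂)) :
    (IsRepEquiv (twist π₁ (ω₂.comp ω₁.ker.subtype)) π₁ ∧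
        IsRepEquiv (twist π₂ (ω₂.comp ω₁.ker.subtype)) π₂) ∨
      IsRepEquiv (twist π₁ (ω₂.comp ω₁.ker.subtype)) π₂ :=
  twist_components_dichotomy_general ω₁ ω₂ π h₂ π₁ hπ₁ π₂ hπ₂ hπ₁₂ hres

end RestrictionMult
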